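/- arXiv:1302.0441 — 2 statements merged into one kernel-verified Lean document; each statement's English description precedes it below -/
import Mathlib

section
/- Let G = JᵀJ be positive definite with blocks as above and E a symmetric matrix with E_{zz} = 0. Let U = [[I, (G_{yz}+E_{yz})G_{zz}⁻¹],[0, I]]. Then the yy-block of U⁻¹ G U⁻ᵀ equals G_s + E_{yz}G_{zz}⁻¹E_{zy}, where G_s = G_{yy} − G_{yz}G_{zz}⁻¹G_{zy}; the yz-block equals −E_{yz} and the zz-block equals G_{zz}. -/
/-!
Congruence by a block unit upper-triangular matrix is one step of block Gaussian elimination.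
Eliminating with `G_yz + E_yz` in place of `G_yz` overshoots by `E_yz`: the off-diagonal block
becomes `-E_yz` and the Schur complement picks up `E_yz G_zz⁻¹ E_zy`. Invertibility and symmetry of
`G_zz` come from its being a principal block of the positive definite `G`.
-/

open Matrix

namespace Matrix

variable {m n R : Type*}

lemma PosDef.of_fromBlocks₂₂ [Ring R] [PartialOrder R] [StarRing R] {A : Matrix n n R}
    {B : Matrix n m R} {C : Matrix m n R} {D : Matrix m m R} (h : (fromBlocks A B C D).PosDef) :
    D.PosDef :=
  h.submatrix Sum.inr_injective

variable [Fintype m] [Fintype n] [DecidableEq m] [DecidableEq n] [CommRing R]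

lemma fromBlocks_one_neg_mul_fromBlocks_mul_transpose (M : Matrix n m R) (A : Matrix n n R)
    (B : Matrix n m R) (D : Matrix m m R) :
    fromBlocks 1 (-M) 0 1 * fromBlocks A B Bᵀ D * (fromBlocks 1 (-M) 0 1)ᵀ =
      fromBlocks (A - M * Bᵀ - B * Mᵀ + M * D * Mᵀ) (B - M * D) (Bᵀ - D * Mᵀ) D := by
  simp only [fromBlocks_transpose, fromBlocks_multiply, transpose_one, transpose_zero,
    transpose_neg, Matrix.one_mul, Matrix.mul_one, Matrix.neg_mul, Matrix.mul_neg,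
    Matrix.zero_mul, Matrix.mul_zero, Matrix.add_mul]
  congr 1 <;> abel

lemma fromBlocks_one_neg_mul_inv_mul_fromBlocks_mul_transpose (A : Matrix n n R)
    (B E : Matrix n m R) {D : Matrix m m R} (hD : Dᵀ = D) (hdet : IsUnit D.det) :
    fromBlocks 1 (-((B + E) * D⁻¹)) 0 1 * fromBlocks A B Bᵀ D *
        (fromBlocks 1 (-((B + E) * D⁻¹)) 0 1)ᵀ =
      fromBlocks (A - B * D⁻¹ * Bᵀ + E * D⁻¹ * Eᵀ) (-E) (-Eᵀ) D := by
  have hMD : (B + E) * D⁻¹ * D = B + E := nonsing_inv_mul_cancel_right _ _ hdet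
  have hMt : ((B + E) * D⁻¹)ᵀ = D⁻¹ * (B + E)ᵀ := by
    rw [transpose_mul, transpose_nonsing_inv, hD]
  rw [fromBlocks_one_neg_mul_fromBlocks_mul_transpose, hMD, hMt,
    mul_nonsing_inv_cancel_left _ _ hdet]
  congr 1
  · simp only [transpose_add, Matrix.add_mul, Matrix.mul_add, Matrix.mul_assoc]
    abel
  · abel
  · rw [transpose_add]
    abel

end Matrix

/-- For `G = JᵀJ` positive definite with blocks `G_yy, G_yz, G_zy = G_yzᵀ, G_zz`,
`E` symmetric with `E_zz = 0`, and `U = [[I, (G_yz+E_yz)G_zz⁻¹],[0, I]]`, the matrix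
`U⁻¹ G U⁻ᵀ` equals `[[G_s + E_yz G_zz⁻¹ E_zy, -E_yz],[-E_zy, G_zz]]`
where `G_s = G_yy - G_yz G_zz⁻¹ G_zy`. -/
theorem stmt9 {p q : ℕ}
    (Gyy : Matrix (Fin p) (Fin p) ℝ) (Gyz : Matrix (Fin p) (Fin q) ℝ)
    (Gzz : Matrix (Fin q) (Fin q) ℝ) (Eyz : Matrix (Fin p) (Fin q) ℝ)
    (hG : (Matrix.fromBlocks Gyy Gyz Gyzᵀ Gzz).PosDef)
    (Uinv : Matrix (Fin p ⊕ Fin q) (Fin p ⊕ Fin q) ℝ)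
    (hUinv : Uinv = Matrix.fromBlocks 1 (-((Gyz + Eyz) * Gzz⁻¹)) 0 1)
    (Gs : Matrix (Fin p) (Fin p) ℝ) (hGs : Gs = Gyy - Gyz * Gzz⁻¹ * Gyzᵀ) :
    Uinv * (Matrix.fromBlocks Gyy Gyz Gyzᵀ Gzz) * Uinvᵀ =
      Matrix.fromBlocks (Gs + Eyz * Gzz⁻¹ * Eyzᵀ) (-Eyz) (-Eyzᵀ) Gzz := by
  have hGzz : Gzz.PosDef := hG.of_fromBlocks₂₂
  subst hUinv hGs
  exact fromBlocks_one_neg_mul_inv_mul_fromBlocks_mul_transpose Gyy Gyz Eyz hGzz.1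
    hGzz.det_pos.ne'.isUnit
end

section
/- Suppose f : ℝ^N → ℝ is differentiable, bounded below, with L-Lipschitz gradient, and the backtracking line search with trial point adjustment is run: at each iterate u^k, a direction Δu^k = −B_k⁻¹∇f(u^k) is taken with B_k symmetric positive definite with eigenvalues in [λ, Λ] (0 < λ ≤ Λ < ∞), a step size s_k = α^{j_k} is chosen as the largest α^j (j ≥ 0, α ∈ (0,1)) satisfying f(u_d(u^k + s Δu^k)) − f(u^k) ≤ δ s ∇f(u^k)ᵀΔu^k with δ ∈ (0,1/2), and u^{k+1} = u_d(u^k + s_k Δu^k) where the adjustment u_d satisfies f(u_d(u)) ≤ f(u) for all u. Then ∇f(u^k) → 0 as k → ∞. -/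
open scoped InnerProductSpace NNReal

/-!
Since `B_k Δu^k = -∇f(u^k)`, the spectral bounds give `⟪∇f(u^k), Δu^k⟫ ≤ -λ‖Δu^k‖²` and
`‖∇f(u^k)‖ ≤ Λ‖Δu^k‖`. By the descent lemma `f(x + v) ≤ f(x) + ⟪∇f(x), v⟫ + L‖v‖²`, the Armijo
test can only fail for steps `s > (1 - δ)λ/L`, so backtracking yields `s_k ≥ min(1, α(1 - δ)λ/L)`,
and the adjustment `u_d` can only lower `f`. Hence every iteration lowers `f` by a fixed multiple
of `‖Δu^k‖²`; as `f` is bounded below these decreases tend to `0`, so `Δu^k → 0` and with it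
`∇f(u^k) → 0`.
-/

open Filter Topology

section InnerProductSpace

variable {E : Type*} [NormedAddCommGroup E] [InnerProductSpace ℝ E]

theorem ContinuousLinearMap.opNorm_le_of_isSymmetric_of_abs_inner_le {T : E →L[ℝ] E}
    (hT : (T : E →ₗ[ℝ] E).IsSymmetric) {C : ℝ} (hC : 0 ≤ C)
    (h : ∀ x, |⟪T x, x⟫_ℝ| ≤ C * ‖x‖ ^ 2) : ‖T‖ ≤ C := by
  rw [T.norm_eq_iSup_rayleighQuotient hT]
  refine ciSup_le fun x => ?_
  rcases eq_or_ne x 0 with rfl | hx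
  · simpa using hC
  have hx2 : 0 < ‖x‖ ^ 2 := by positivity
  rw [rayleighQuotient, reApplyInnerSelf_apply, RCLike.re_to_real, abs_div, abs_of_pos hx2,
    div_le_iff₀ hx2]
  exact h x

variable [CompleteSpace E]

theorem image_add_le_of_lipschitzWith_gradient {f : E → ℝ} (hf : Differentiable ℝ f) {K : ℝ≥0}
    (hlip : LipschitzWith K (gradient f)) (x v : E) :
    f (x + v) ≤ f x + ⟪gradient f x, v⟫_ℝ + K * ‖v‖ ^ 2 := by
  have hfderiv : ∀ z, ‖fderiv ℝ f z - fderiv ℝ f x‖ = ‖gradient f z - gradient f x‖ := fun z => by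
    rw [← toDual_gradient, ← toDual_gradient, ← map_sub, LinearIsometryEquiv.norm_map]
  have hbound : ∀ z ∈ Metric.closedBall x ‖v‖, ‖fderiv ℝ f z - fderiv ℝ f x‖ ≤ K * ‖v‖ :=
    fun z hz => by
      rw [hfderiv, ← dist_eq_norm]
      exact (hlip.dist_le_mul z x).trans (by gcongr; exact hz)
  have hmvt := (convex_closedBall x ‖v‖).norm_image_sub_le_of_norm_fderiv_le'
    (fun z _ => hf z) hbound (Metric.mem_closedBall_self (norm_nonneg v))
    (by simp : x + v ∈ Metric.closedBall x ‖v‖)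
  rw [add_sub_cancel_left, ← toDual_gradient, InnerProductSpace.toDual_apply_apply,
    Real.norm_eq_abs] at hmvt
  linarith [(le_abs_self _).trans hmvt]

theorem one_sub_mul_lt_of_armijo_fails {f : E → ℝ} (hf : Differentiable ℝ f) {K : ℝ≥0}
    (hlip : LipschitzWith K (gradient f)) {x d : E} {δ lam t : ℝ} (hδ : δ ≤ 1)
    (hdesc : ⟪gradient f x, d⟫_ℝ ≤ -(lam * ‖d‖ ^ 2)) (ht : 0 < t)
    (hfail : δ * t * ⟪gradient f x, d⟫_ℝ < f (x + t • d) - f x) :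
    (1 - δ) * lam < K * t := by
  have hquad := image_add_le_of_lipschitzWith_gradient hf hlip x (t • d)
  rw [inner_smul_right, norm_smul, Real.norm_of_nonneg ht.le] at hquad
  have key : (1 - δ) * lam * (t * ‖d‖ ^ 2) < K * t * (t * ‖d‖ ^ 2) := by
    nlinarith [mul_le_mul_of_nonneg_left hdesc (mul_nonneg (sub_nonneg.2 hδ) ht.le)]
  have hpos : 0 < t * ‖d‖ ^ 2 := by
    by_contra! hle
    have : t * ‖d‖ ^ 2 = 0 := le_antisymm hle (by positivity)
    simp [this] at key
  exact lt_of_mul_lt_mul_right key hpos.le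

end InnerProductSpace

theorem min_le_pow_of_forall_lt_pow {α κ : ℝ} (hα : 0 ≤ α) {j : ℕ}
    (h : ∀ i < j, κ < α ^ i) : min 1 (α * κ) ≤ α ^ j := by
  cases j with
  | zero => simp
  | succ m =>
    rw [pow_succ']
    exact (min_le_right _ _).trans (mul_le_mul_of_nonneg_left (h m m.lt_succ_self).le hα)

theorem tendsto_zero_of_mul_le_sub_succ {a b : ℕ → ℝ} {c : ℝ} (hbdd : BddBelow (Set.range a))
    (hc : 0 < c) (hb : ∀ k, 0 ≤ b k) (hab : ∀ k, c * b k ≤ a k - a (k + 1)) :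
    Tendsto b atTop (𝓝 0) := by
  have hanti : Antitone a :=
    antitone_nat_of_succ_le fun k => by nlinarith [hab k, mul_nonneg hc.le (hb k)]
  have hlim := tendsto_atTop_ciInf hanti hbdd
  have hdiff : Tendsto (fun k => (a k - a (k + 1)) / c) atTop (𝓝 0) := by
    simpa using (hlim.sub (hlim.comp (tendsto_add_atTop_nat 1))).div_const c
  refine squeeze_zero hb (fun k => ?_) hdiff
  rw [le_div_iff₀ hc, mul_comm]
  exact hab k

/-- Global convergence of the backtracking line search with trial point adjustment:
if `f` is differentiable, bounded below, with `L`-Lipschitz gradient, directions are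
`Δu^k = -B_k⁻¹ ∇f(u^k)` with `B_k` symmetric with spectrum in `[λ, Λ] ⊂ (0,∞)`, step
sizes `α^{j_k}` are chosen by backtracking (smallest `j` satisfying the Armijo
condition on the adjusted trial point), the adjustment satisfies `f(u_d(u)) ≤ f(u)`,
and `u^{k+1} = u_d(u^k + α^{j_k} Δu^k)`, then `∇f(u^k) → 0`. -/
theorem stmt15 {N : ℕ}
    (f : EuclideanSpace ℝ (Fin N) → ℝ) (hf : Differentiable ℝ f)
    (hbdd : BddBelow (Set.range f))
    (L : NNReal) (hlip : LipschitzWith L (gradient f))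
    (δ α lam Lam : ℝ) (hδ : δ ∈ Set.Ioo (0:ℝ) (1/2)) (hα : α ∈ Set.Ioo (0:ℝ) 1)
    (hlam : 0 < lam) (hlamLam : lam ≤ Lam)
    (B : ℕ → EuclideanSpace ℝ (Fin N) →L[ℝ] EuclideanSpace ℝ (Fin N))
    (hsym : ∀ k x y, ⟪B k x, y⟫_ℝ = ⟪x, B k y⟫_ℝ)
    (heig : ∀ k x, lam * ‖x‖ ^ 2 ≤ ⟪B k x, x⟫_ℝ ∧ ⟪B k x, x⟫_ℝ ≤ Lam * ‖x‖ ^ 2)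
    (ud : EuclideanSpace ℝ (Fin N) → EuclideanSpace ℝ (Fin N))
    (hud : ∀ x, f (ud x) ≤ f x)
    (u Δu : ℕ → EuclideanSpace ℝ (Fin N))
    (hdir : ∀ k, B k (Δu k) = -gradient f (u k))
    (j : ℕ → ℕ)
    (harmijo : ∀ k, f (ud (u k + α ^ j k • Δu k)) - f (u k) ≤
        δ * α ^ j k * ⟪gradient f (u k), Δu k⟫_ℝ)
    (hmin : ∀ k j', j' < j k →
        ¬ (f (ud (u k + α ^ j' • Δu k)) - f (u k) ≤
            δ * α ^ j' * ⟪gradient f (u k), Δu k⟫_ℝ))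
    (hupd : ∀ k, u (k + 1) = ud (u k + α ^ j k • Δu k)) :
    Filter.Tendsto (fun k => gradient f (u k)) Filter.atTop (nhds 0) := by
  obtain ⟨hδ0, hδ1⟩ := hδ
  obtain ⟨hα0, -⟩ := hα
  have hdesc k : ⟪gradient f (u k), Δu k⟫_ℝ ≤ -(lam * ‖Δu k‖ ^ 2) := by
    rw [← neg_neg (gradient f (u k)), ← hdir, inner_neg_left]
    exact neg_le_neg (heig k _).1
  have hgrad k : ‖gradient f (u k)‖ ≤ Lam * ‖Δu k‖ := by
    have hBk : ‖B k‖ ≤ Lam := (B k).opNorm_le_of_isSymmetric_of_abs_inner_le (hsym k)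
      (hlam.le.trans hlamLam) fun x => abs_le.2 ⟨by nlinarith [heig k x], (heig k x).2⟩
    rw [← norm_neg, ← hdir]
    exact (B k).le_of_opNorm_le hBk _
  -- `L` may be `0`, so use the positive Lipschitz constant `L + 1` of the gradient.
  set κ := (1 - δ) * lam / (L + 1 : ℝ≥0)
  have hstep k : min 1 (α * κ) ≤ α ^ j k := by
    refine min_le_pow_of_forall_lt_pow hα0.le fun i hi => ?_
    refine (div_lt_iff₀' (by positivity)).2 (one_sub_mul_lt_of_armijo_fails hf
      (hlip.weaken le_self_add) (by linarith) (hdesc k) (pow_pos hα0 i) ?_)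
    exact (not_le.1 (hmin k i hi)).trans_le (by linarith [hud (u k + α ^ i • Δu k)])
  have hc : 0 < δ * lam * min 1 (α * κ) := by
    have : 0 < κ := div_pos (by nlinarith) (by positivity)
    positivity
  have hdecrease k : δ * lam * min 1 (α * κ) * ‖Δu k‖ ^ 2 ≤ f (u k) - f (u (k + 1)) := by
    calc δ * lam * min 1 (α * κ) * ‖Δu k‖ ^ 2 ≤ δ * α ^ j k * (lam * ‖Δu k‖ ^ 2) := by
          nlinarith [mul_le_mul_of_nonneg_left (hstep k)
            (by positivity : 0 ≤ δ * lam * ‖Δu k‖ ^ 2)]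
      _ ≤ -(δ * α ^ j k * ⟪gradient f (u k), Δu k⟫_ℝ) := by
          nlinarith [mul_le_mul_of_nonneg_left (hdesc k) (by positivity : 0 ≤ δ * α ^ j k)]
      _ ≤ f (u k) - f (u (k + 1)) := by linarith [hupd k ▸ harmijo k]
  have hΔ : Tendsto (fun k => ‖Δu k‖) atTop (𝓝 0) := by
    simpa using (tendsto_zero_of_mul_le_sub_succ (hbdd.mono (Set.range_comp_subset_range u f))
      hc (fun k => sq_nonneg ‖Δu k‖) hdecrease).sqrt
  rw [tendsto_zero_iff_norm_tendsto_zero]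
  exact squeeze_zero (fun k => norm_nonneg _) hgrad (by simpa using hΔ.const_mul Lam)
end
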